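/- For every real x ≥ 1, D(x) = ∑_{n=1}^∞ n²(n²πx − 3/2)e^{−n²πx} > 0; consequently S(ω) = 8π·e^{5ω/2}·D(e^{2ω}) > 0 for every ω ≥ 0. -/
import Mathlib

open Complex

/-- `D(x) = ∑_{n=1}^∞ n² (n²πx − 3/2) exp(−n²πx)`. -/
noncomputable def Dker (x : ℝ) : ℝ :=
  ∑' n : ℕ, ((n : ℝ) + 1) ^ 2 * (((n : ℝ) + 1) ^ 2 * Real.pi * x - 3 / 2) *
    Real.exp (-((n : ℝ) + 1) ^ 2 * Real.pi * x)

/-- `S(ω) = 8π e^{5ω/2} D(e^{2ω})`. -/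
noncomputable def Sker (ω : ℝ) : ℝ :=
  8 * Real.pi * Real.exp (5 * ω / 2) * Dker (Real.exp (2 * ω))

lemma lower_bound (x : ℝ) (hx : 1 ≤ x) (n : ℕ) :
    (3:ℝ)/2 < ((n : ℝ) + 1) ^ 2 * Real.pi * x := by
  have hn0 : (0:ℝ) ≤ (n : ℝ) := Nat.cast_nonneg n
  have ha : (1:ℝ) ≤ ((n : ℝ) + 1) ^ 2 := by nlinarith
  have hπ : (0:ℝ) < Real.pi := Real.pi_pos
  nlinarith [mul_le_mul_of_nonneg_right ha (mul_pos hπ (by linarith : (0:ℝ) < x)).le,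
    mul_le_mul_of_nonneg_left hx hπ.le, Real.pi_gt_three]

lemma summable_D (x : ℝ) (hx : 1 ≤ x) :
    Summable fun n : ℕ => ((n : ℝ) + 1) ^ 2 * (((n : ℝ) + 1) ^ 2 * Real.pi * x - 3 / 2) *
      Real.exp (-((n : ℝ) + 1) ^ 2 * Real.pi * x) := by
  have hπx : (0 : ℝ) < Real.pi * x := by positivity
  have h := (Real.summable_pow_mul_exp_neg_nat_mul 4 hπx).mul_left (Real.pi * x)
  have h2 := h.comp_injective (add_left_injective 1)
  apply Summable.of_nonneg_of_le (fun n => ?_) (fun n => ?_) h2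
  · have h1 := lower_bound x hx n
    have h2 : (0:ℝ) < ((n : ℝ) + 1) ^ 2 * Real.pi * x - 3/2 := by linarith
    have := Real.exp_pos (-((n : ℝ) + 1) ^ 2 * Real.pi * x)
    positivity
  · simp only [Function.comp]
    push_cast
    have hn0 : (0:ℝ) ≤ (n : ℝ) := Nat.cast_nonneg n
    have hn1 : (1:ℝ) ≤ (n : ℝ) + 1 := by linarith
    have key : Real.exp (-((n : ℝ) + 1) ^ 2 * Real.pi * x)
        ≤ Real.exp (-(Real.pi * x) * ((n : ℝ) + 1)) := by
      apply Real.exp_le_exp.mpr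
      nlinarith [mul_nonneg (mul_nonneg hπx.le hn0) (by linarith : (0:ℝ) ≤ (n:ℝ)+1)]
    calc ((n : ℝ) + 1) ^ 2 * (((n : ℝ) + 1) ^ 2 * Real.pi * x - 3 / 2) *
          Real.exp (-((n : ℝ) + 1) ^ 2 * Real.pi * x)
        ≤ ((n : ℝ) + 1) ^ 2 * (((n : ℝ) + 1) ^ 2 * Real.pi * x) *
          Real.exp (-((n : ℝ) + 1) ^ 2 * Real.pi * x) := by
          apply mul_le_mul_of_nonneg_right _ (Real.exp_nonneg _)
          have : (0:ℝ) ≤ ((n : ℝ) + 1) ^ 2 := by positivity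
          nlinarith
      _ ≤ Real.pi * x * (((n : ℝ) + 1) ^ 4 * Real.exp (-(Real.pi * x) * ((n : ℝ) + 1))) := by
          have h4 : ((n : ℝ) + 1) ^ 2 * (((n : ℝ) + 1) ^ 2 * Real.pi * x)
              = Real.pi * x * ((n : ℝ) + 1) ^ 4 := by ring
          rw [h4, mul_assoc]
          apply mul_le_mul_of_nonneg_left _ (le_of_lt hπx)
          exact mul_le_mul_of_nonneg_left key (by positivity)

lemma Dker_pos {x : ℝ} (hx : 1 ≤ x) : 0 < Dker x := by
  have hs := summable_D x hx
  have hpos : ∀ n : ℕ, (0:ℝ) < ((n : ℝ) + 1) ^ 2 * (((n : ℝ) + 1) ^ 2 * Real.pi * x - 3 / 2) *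
      Real.exp (-((n : ℝ) + 1) ^ 2 * Real.pi * x) := by
    intro n
    have h1 := lower_bound x hx n
    have h2 : (0:ℝ) < ((n : ℝ) + 1) ^ 2 * Real.pi * x - 3/2 := by linarith
    have := Real.exp_pos (-((n : ℝ) + 1) ^ 2 * Real.pi * x)
    positivity
  exact Summable.tsum_pos hs (fun n => (hpos n).le) 0 (hpos 0)

/-- `D(x) > 0` for every `x ≥ 1`; consequently `S(ω) > 0` for every
`ω ≥ 0`. -/
theorem stmt_10 :
    (∀ x : ℝ, 1 ≤ x → 0 < Dker x) ∧ (∀ ω : ℝ, 0 ≤ ω → 0 < Sker ω) := by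
  refine ⟨fun x hx => Dker_pos hx, fun ω hω => ?_⟩
  have hx : (1:ℝ) ≤ Real.exp (2 * ω) := Real.one_le_exp (by linarith)
  have := Dker_pos hx
  unfold Sker
  positivity
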